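/- Let μ > 1 and ξ = (N(4μ²+2μ+2))^(-1/2). Then ∑_{l=1}^{N} (4ξ²μ² + 2ξ²μ + 2ξ²)(1 + (2N−l)ξ²) lies in the interval [1, 3/2]. -/

import Mathlib

/-!
Write `c = 4μ² + 2μ + 2`, so that the summand is `ξ²c (1 + (2N - l) ξ²)` and `ξ² = (Nc)⁻¹`.
Gauss's formula evaluates the sum exactly as `1 + (3N - 1) / (2Nc)`, and the excess term lies in
`[0, 1/2]` because `c ≥ 3` once `μ > 1`.
-/

open Finset

lemma Real.rpow_neg_half_sq {y : ℝ} (hy : 0 ≤ y) : (y ^ (-(1/2) : ℝ)) ^ 2 = y⁻¹ := by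
  rw [← Real.rpow_natCast, ← Real.rpow_mul hy]
  norm_num [Real.rpow_neg_one]

lemma Finset.sum_Icc_one_natCast (N : ℕ) : ∑ l ∈ Icc 1 N, (l : ℝ) = N * (N + 1) / 2 := by
  induction N with
  | zero => simp
  | succ n ih =>
    rw [sum_Icc_succ_top (by omega), ih]
    push_cast
    ring

lemma Finset.sum_Icc_one_two_mul_sub (N : ℕ) :
    ∑ l ∈ Icc 1 N, ((2 * N : ℝ) - l) = N * (3 * N - 1) / 2 := by
  rw [sum_sub_distrib, sum_Icc_one_natCast, sum_const, Nat.card_Icc, nsmul_eq_mul]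
  push_cast
  ring

lemma sum_Icc_inv_mul_one_add {N : ℕ} (hN : 0 < N) {c : ℝ} (hc : c ≠ 0) :
    ∑ l ∈ Icc 1 N, ((N * c)⁻¹ * c) * (1 + ((2 * N : ℝ) - l) * (N * c)⁻¹)
      = 1 + (3 * N - 1) / (2 * N * c) := by
  have hN' : (N : ℝ) ≠ 0 := by positivity
  have hsummand (l : ℕ) : ((N * c)⁻¹ * c) * (1 + ((2 * N : ℝ) - l) * (N * c)⁻¹)
      = (N * c)⁻¹ * c + (N * c)⁻¹ * c * (N * c)⁻¹ * ((2 * N : ℝ) - l) := by ring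
  rw [sum_congr rfl fun l _ => hsummand l, sum_add_distrib, sum_const, ← mul_sum,
    sum_Icc_one_two_mul_sub, Nat.card_Icc, nsmul_eq_mul]
  field_simp
  push_cast
  ring

lemma one_add_div_mem_Icc {t c : ℝ} (ht : 1 ≤ t) (hc : 3 ≤ c) :
    1 + (3 * t - 1) / (2 * t * c) ∈ Set.Icc (1 : ℝ) (3 / 2) := by
  have hpos : 0 < 2 * t * c := by positivity
  constructor
  · have : 0 ≤ (3 * t - 1) / (2 * t * c) := div_nonneg (by linarith) hpos.le
    linarith
  · have : (3 * t - 1) / (2 * t * c) ≤ 1 / 2 := by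
      rw [div_le_div_iff₀ hpos (by norm_num)]
      nlinarith
    linarith

theorem stmt_9 (N : ℕ) (hN : 0 < N) (μ : ℝ) (hμ : 1 < μ) (ξ : ℝ)
    (hξ : ξ = ((N : ℝ) * (4 * μ ^ 2 + 2 * μ + 2)) ^ (-(1/2) : ℝ)) :
    ∑ l ∈ Finset.Icc 1 N,
      (4 * ξ ^ 2 * μ ^ 2 + 2 * ξ ^ 2 * μ + 2 * ξ ^ 2) * (1 + ((2 * N : ℝ) - l) * ξ ^ 2)
      ∈ Set.Icc (1 : ℝ) (3 / 2) := by
  set c : ℝ := 4 * μ ^ 2 + 2 * μ + 2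
  have hc : 3 ≤ c := by nlinarith
  have hξ2 : ξ ^ 2 = (N * c)⁻¹ := by
    rw [hξ, Real.rpow_neg_half_sq (by positivity)]
  have hfactor : 4 * ξ ^ 2 * μ ^ 2 + 2 * ξ ^ 2 * μ + 2 * ξ ^ 2 = ξ ^ 2 * c := by ring
  rw [hfactor, hξ2, sum_Icc_inv_mul_one_add hN (by positivity)]
  exact one_add_div_mem_Icc (by exact_mod_cast hN) hc
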